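/- Let C be a category with full subcategories C₀ and C₁, and let C₀₁ = C₀ ∩ C₁. Assume every object of C lies in C₀ or in C₁, and that for every morphism c → c' in C, if c' lies in C₀ then c lies in C₀, and if c' lies in C₁ then c lies in C₁. Then C is the pushout of the diagram C₀ ← C₀₁ → C₁ in the category of (small) categories. -/

import Mathlib

/-!
The hypotheses say that membership in `C₀` and in `C₁` is pulled back along morphisms, so a
morphism `c ⟶ c'` lies in whichever of `C₀`, `C₁` contains its target. Given functors
`F₀ : C₀ ⥤ D` and `F₁ : C₁ ⥤ D` agreeing on `C₀₁`, the glued functor applies `F₀` to objects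
of `C₀` and to morphisms with target in `C₀`, and `F₁` otherwise; agreement on `C₀₁` makes the
choice irrelevant wherever both apply, which gives functoriality and the two factorizations.
Uniqueness holds because every morphism of `C` comes from `C₀` or from `C₁`.
-/

open CategoryTheory

namespace CategoryTheory.ObjectProperty

variable {C : Type*} [Category C] {D : Type*} [Category D] {P₀ P₁ : ObjectProperty C}

lemma homMk_id {P : ObjectProperty C} (X : P.FullSubcategory) : homMk (𝟙 X.obj) = 𝟙 X :=
  rfl

theorem functor_ext_of_ι_comp_eq (hcov : ∀ c, P₀ c ∨ P₁ c)
    (h₀ : ∀ {c c' : C}, (c ⟶ c') → P₀ c' → P₀ c) (h₁ : ∀ {c c' : C}, (c ⟶ c') → P₁ c' → P₁ c)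
    {G G' : C ⥤ D} (e₀ : P₀.ι ⋙ G = P₀.ι ⋙ G') (e₁ : P₁.ι ⋙ G = P₁.ι ⋙ G') : G = G' := by
  refine Functor.ext (fun c => (hcov c).elim (fun hc => Functor.congr_obj e₀ ⟨c, hc⟩)
    (fun hc => Functor.congr_obj e₁ ⟨c, hc⟩)) fun c c' f => ?_
  rcases hcov c' with hc' | hc'
  · exact Functor.congr_hom e₀ (homMk (X := ⟨c, h₀ f hc'⟩) (Y := ⟨c', hc'⟩) f)
  · exact Functor.congr_hom e₁ (homMk (X := ⟨c, h₁ f hc'⟩) (Y := ⟨c', hc'⟩) f)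

section Glue

variable (hcov : ∀ c, P₀ c ∨ P₁ c)
  (h₀ : ∀ {c c' : C}, (c ⟶ c') → P₀ c' → P₀ c) (h₁ : ∀ {c c' : C}, (c ⟶ c') → P₁ c' → P₁ c)
  (F₀ : P₀.FullSubcategory ⥤ D) (F₁ : P₁.FullSubcategory ⥤ D)
  (hF : ιOfLE (inf_le_left : P₀ ⊓ P₁ ≤ P₀) ⋙ F₀ = ιOfLE inf_le_right ⋙ F₁)

open Classical in
noncomputable def glueObj (c : C) : D :=
  if h : P₀ c then F₀.obj ⟨c, h⟩ else F₁.obj ⟨c, (hcov c).resolve_left h⟩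

lemma glueObj_eq₀ {c : C} (hc : P₀ c) : glueObj hcov F₀ F₁ c = F₀.obj ⟨c, hc⟩ :=
  dif_pos hc

include hF in
lemma glueObj_eq₁ {c : C} (hc : P₁ c) : glueObj hcov F₀ F₁ c = F₁.obj ⟨c, hc⟩ := by
  by_cases h : P₀ c
  · exact (dif_pos h).trans (Functor.congr_obj hF ⟨c, h, hc⟩)
  · exact dif_neg h

open Classical in
noncomputable def glueMap {c c' : C} (f : c ⟶ c') :
    glueObj hcov F₀ F₁ c ⟶ glueObj hcov F₀ F₁ c' :=
  if h' : P₀ c' then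
    eqToHom (glueObj_eq₀ hcov F₀ F₁ (h₀ f h')) ≫
      F₀.map (homMk (X := ⟨c, _⟩) (Y := ⟨c', h'⟩) f) ≫ eqToHom (glueObj_eq₀ hcov F₀ F₁ h').symm
  else
    have h' := (hcov c').resolve_left h'
    eqToHom (glueObj_eq₁ hcov F₀ F₁ hF (h₁ f h')) ≫
      F₁.map (homMk (X := ⟨c, _⟩) (Y := ⟨c', h'⟩) f) ≫ eqToHom (glueObj_eq₁ hcov F₀ F₁ hF h').symm

lemma glueMap_eq₀ {c c' : C} (f : c ⟶ c') (hc : P₀ c) (hc' : P₀ c') :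
    glueMap hcov h₀ h₁ F₀ F₁ hF f = eqToHom (glueObj_eq₀ hcov F₀ F₁ hc) ≫
      F₀.map (homMk (X := ⟨c, hc⟩) (Y := ⟨c', hc'⟩) f) ≫
        eqToHom (glueObj_eq₀ hcov F₀ F₁ hc').symm :=
  dif_pos hc'

lemma glueMap_eq₁ {c c' : C} (f : c ⟶ c') (hc : P₁ c) (hc' : P₁ c') :
    glueMap hcov h₀ h₁ F₀ F₁ hF f = eqToHom (glueObj_eq₁ hcov F₀ F₁ hF hc) ≫
      F₁.map (homMk (X := ⟨c, hc⟩) (Y := ⟨c', hc'⟩) f) ≫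
        eqToHom (glueObj_eq₁ hcov F₀ F₁ hF hc').symm := by
  by_cases h' : P₀ c'
  · have hF_map := Functor.congr_hom hF (homMk (X := ⟨c, h₀ f h', hc⟩) (Y := ⟨c', h', hc'⟩) f)
    simp only [Functor.comp_map, ιOfLE_map, homMk_hom] at hF_map
    rw [glueMap, dif_pos h', hF_map]
    simp
  · exact dif_neg h'

noncomputable def glue : C ⥤ D where
  obj := glueObj hcov F₀ F₁
  map := glueMap hcov h₀ h₁ F₀ F₁ hF
  map_id c := by
    rcases hcov c with hc | hc
    · simp [glueMap_eq₀ hcov h₀ h₁ F₀ F₁ hF _ hc hc, homMk_id ⟨c, hc⟩]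
    · simp [glueMap_eq₁ hcov h₀ h₁ F₀ F₁ hF _ hc hc, homMk_id ⟨c, hc⟩]
  map_comp {c c' c''} f g := by
    rcases hcov c'' with hc'' | hc''
    · have hc' := h₀ g hc''
      rw [glueMap_eq₀ hcov h₀ h₁ F₀ F₁ hF _ (h₀ f hc') hc',
        glueMap_eq₀ hcov h₀ h₁ F₀ F₁ hF _ hc' hc'',
        glueMap_eq₀ hcov h₀ h₁ F₀ F₁ hF _ (h₀ f hc') hc'']
      simp only [Category.assoc, eqToHom_trans_assoc, eqToHom_refl, Category.id_comp]
      rw [← Functor.map_comp_assoc]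
      rfl
    · have hc' := h₁ g hc''
      rw [glueMap_eq₁ hcov h₀ h₁ F₀ F₁ hF _ (h₁ f hc') hc',
        glueMap_eq₁ hcov h₀ h₁ F₀ F₁ hF _ hc' hc'',
        glueMap_eq₁ hcov h₀ h₁ F₀ F₁ hF _ (h₁ f hc') hc'']
      simp only [Category.assoc, eqToHom_trans_assoc, eqToHom_refl, Category.id_comp]
      rw [← Functor.map_comp_assoc]
      rfl

lemma ι_comp_glue₀ : P₀.ι ⋙ glue hcov h₀ h₁ F₀ F₁ hF = F₀ :=
  Functor.ext (fun c => glueObj_eq₀ hcov F₀ F₁ c.property)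
    fun c c' f => glueMap_eq₀ hcov h₀ h₁ F₀ F₁ hF f.hom c.property c'.property

lemma ι_comp_glue₁ : P₁.ι ⋙ glue hcov h₀ h₁ F₀ F₁ hF = F₁ :=
  Functor.ext (fun c => glueObj_eq₁ hcov F₀ F₁ hF c.property)
    fun c c' f => glueMap_eq₁ hcov h₀ h₁ F₀ F₁ hF f.hom c.property c'.property

end Glue

end CategoryTheory.ObjectProperty

theorem stmt0 (C : Type) [SmallCategory C] (P₀ P₁ : C → Prop)
    (hcov : ∀ c : C, P₀ c ∨ P₁ c)
    (h₀ : ∀ {c c' : C}, (c ⟶ c') → P₀ c' → P₀ c)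
    (h₁ : ∀ {c c' : C}, (c ⟶ c') → P₁ c' → P₁ c) :
    IsPushout
      (Z := Cat.of (ObjectProperty.FullSubcategory fun c => P₀ c ∧ P₁ c))
      (X := Cat.of (ObjectProperty.FullSubcategory P₀))
      (Y := Cat.of (ObjectProperty.FullSubcategory P₁))
      (P := Cat.of C)
      (ObjectProperty.ιOfLE (P := fun c => P₀ c ∧ P₁ c) (P' := P₀) fun _ h => h.1).toCatHom
      (ObjectProperty.ιOfLE (P := fun c => P₀ c ∧ P₁ c) (P' := P₁) fun _ h => h.2).toCatHom
      (ObjectProperty.ι P₀).toCatHom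
      (ObjectProperty.ι P₁).toCatHom := by
  open ObjectProperty in
  refine ⟨⟨rfl⟩, ⟨Limits.PushoutCocone.IsColimit.mk _
    (fun s => (glue hcov h₀ h₁ s.inl.toFunctor s.inr.toFunctor
      (congrArg Cat.Hom.toFunctor s.condition)).toCatHom)
    (fun s => Cat.ext (ι_comp_glue₀ hcov h₀ h₁ _ _ _))
    (fun s => Cat.ext (ι_comp_glue₁ hcov h₀ h₁ _ _ _))
    (fun s m hm₀ hm₁ => Cat.ext (functor_ext_of_ι_comp_eq hcov h₀ h₁
      ((congrArg Cat.Hom.toFunctor hm₀).trans (ι_comp_glue₀ hcov h₀ h₁ _ _ _).symm)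
      ((congrArg Cat.Hom.toFunctor hm₁).trans (ι_comp_glue₁ hcov h₀ h₁ _ _ _).symm)))⟩⟩
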